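/- In the Distinct Immediate Snapshot (DIS) task, where in addition to the immediate snapshot properties all outputs are pairwise distinct (p ≠ q implies IS_p ≠ IS_q), the map p ↦ |IS_p| is injective, and the snapshot sizes are exactly |P| distinct values; moreover p ∈ IS_q iff |IS_p| ≤ |IS_q|, so the processors are totally ordered by snapshot size. -/
import Mathlib

/-- Distinct Immediate Snapshot: with pairwise distinct snapshots, the map
`p ↦ |IS p|` is injective and `p ∈ IS q ↔ |IS p| ≤ |IS q|`, so the
processors are totally ordered by snapshot size. -/
theorem distinct_immediate_snapshot {P : Type*} [Fintype P] [DecidableEq P]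
    (IS : P → Finset P)
    (hself : ∀ p, p ∈ IS p)
    (hcomp : ∀ p q, p ∈ IS q ∨ q ∈ IS p)
    (hcont : ∀ p q, p ∈ IS q → IS p ⊆ IS q)
    (hdist : ∀ p q, p ≠ q → IS p ≠ IS q) :
    Function.Injective (fun p => (IS p).card) ∧
    ∀ p q, p ∈ IS q ↔ (IS p).card ≤ (IS q).card := by
  have key : ∀ p q, (IS p).card ≤ (IS q).card → p ∈ IS q := by
    intro p q hle
    rcases hcomp p q with h | h
    · exact h
    · have hsub := hcont q p h
      have heq : IS q = IS p := Finset.eq_of_subset_of_card_le hsub hle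
      have : p = q := by
        by_contra hne
        exact hdist p q hne heq.symm
      subst this
      exact hself p
  constructor
  · intro p q hpq
    simp only at hpq
    have h1 := hcont p q (key p q hpq.le)
    have h2 := hcont q p (key q p hpq.ge)
    by_contra hne
    exact hdist p q hne (subset_antisymm h1 h2)
  · intro p q
    exact ⟨fun h => Finset.card_le_card (hcont p q h), key p q⟩
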